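/- (Type 2 lemma) Let G be a DAG with topological order v_1,...,v_n, G_i = G[{v_1,...,v_i}], and let A be a frontier antichain of G_i with v_i ∉ A. Then A is a frontier antichain of G_{i-1}. -/

import Mathlib

/-! Reachability in `G_i` implies reachability in `G_{i+1}`, so antichains of `G_{i+1}` inside
`G_i` stay antichains and dominations in `G_i` stay dominations. Conversely, since the order is
topological, a path of `G_{i+1}` ending in `G_i` never visits `v_i`; so an antichain of `G_i` is
one of `G_{i+1}`. A dominating antichain of `G_i` would therefore dominate `A` in `G_{i+1}`. -/

open Relation

/-- A directed graph (edge relation `E`) is acyclic. -/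
def Acyclic {V : Type*} (E : V → V → Prop) : Prop := ∀ v, ¬ TransGen E v v

/-- `A` is an antichain: its vertices are pairwise non-reachable
(reachability = reflexive-transitive closure of `E`). -/
def IsAC {V : Type*} (E : V → V → Prop) (A : Finset V) : Prop :=
  ∀ a ∈ A, ∀ b ∈ A, a ≠ b → ¬ ReflTransGen E a b

/-- `B` dominates `A`: same size, and every vertex of `B` is reachable from some vertex of `A`. -/
def Dom {V : Type*} (E : V → V → Prop) (B A : Finset V) : Prop :=
  B.card = A.card ∧ ∀ b ∈ B, ∃ a ∈ A, ReflTransGen E a b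

/-- A frontier antichain: an antichain not dominated by any other antichain. -/
def Frontier {V : Type*} (E : V → V → Prop) (A : Finset V) : Prop :=
  IsAC E A ∧ ∀ B : Finset V, IsAC E B → B ≠ A → ¬ Dom E B A

/-- The identity order on `Fin n` is a topological order for `E`. -/
def Topo {n : ℕ} (E : Fin n → Fin n → Prop) : Prop := ∀ u v, E u v → (u : ℕ) < (v : ℕ)

/-- The edge relation of the induced subgraph `G_i` on the first `i` vertices. -/
def Erest {n : ℕ} (E : Fin n → Fin n → Prop) (i : ℕ) (u v : Fin n) : Prop :=
  E u v ∧ (u : ℕ) < i ∧ (v : ℕ) < i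

/-- `A` is a frontier antichain of the induced subgraph `G_i` on the first `i` vertices. -/
def FrontierIn {n : ℕ} (E : Fin n → Fin n → Prop) (i : ℕ) (A : Finset (Fin n)) : Prop :=
  (∀ a ∈ A, (a : ℕ) < i) ∧ IsAC (Erest E i) A ∧
  ∀ B : Finset (Fin n), (∀ b ∈ B, (b : ℕ) < i) → IsAC (Erest E i) B → B ≠ A →
    ¬ Dom (Erest E i) B A

/-- The support `S_i`: union of all frontier antichains of `G_i`. -/
def SupportIn {n : ℕ} (E : Fin n → Fin n → Prop) (i : ℕ) : Set (Fin n) :=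
  {v | ∃ A : Finset (Fin n), FrontierIn E i A ∧ v ∈ A}

section Relations

variable {V : Type*} {R S : V → V → Prop}

lemma IsAC.of_le (hRS : ∀ u v, R u v → S u v) {A : Finset V} (hA : IsAC S A) : IsAC R A :=
  fun a ha b hb hab hR => hA a ha b hb hab (ReflTransGen.mono hRS _ _ hR)

lemma Dom.of_le (hRS : ∀ u v, R u v → S u v) {A B : Finset V} (h : Dom R B A) : Dom S B A :=
  ⟨h.1, fun b hb => (h.2 b hb).imp fun _ ⟨ha, hR⟩ => ⟨ha, ReflTransGen.mono hRS _ _ hR⟩⟩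

end Relations

section Restriction

variable {n : ℕ} {E : Fin n → Fin n → Prop}

lemma Erest.mono {i j : ℕ} (hij : i ≤ j) {u v : Fin n} (h : Erest E i u v) : Erest E j u v :=
  ⟨h.1, h.2.1.trans_le hij, h.2.2.trans_le hij⟩

lemma reflTransGen_erest_of_lt (hE : Topo E) {i j : ℕ} {a b : Fin n}
    (h : ReflTransGen (Erest E j) a b) (hb : (b : ℕ) < i) : ReflTransGen (Erest E i) a b := by
  induction h with
  | refl => exact ReflTransGen.refl
  | @tail c b _ hcb ih =>
    have hc : (c : ℕ) < i := (hE _ _ hcb.1).trans hb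
    exact (ih hc).tail ⟨hcb.1, hc, hb⟩

lemma IsAC.erest_of_lt (hE : Topo E) {i j : ℕ} {B : Finset (Fin n)}
    (hB : ∀ b ∈ B, (b : ℕ) < i) (hBac : IsAC (Erest E i) B) : IsAC (Erest E j) B :=
  fun a ha b hb hab hR => hBac a ha b hb hab (reflTransGen_erest_of_lt hE hR (hB b hb))

end Restriction

/-- Type 2: a frontier antichain of `G_{i+1}` not containing the new
vertex `v_i = ⟨i, hi⟩` is a frontier antichain of `G_i`. -/
theorem type2 {n : ℕ} (E : Fin n → Fin n → Prop) (hE : Topo E)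
    (i : ℕ) (hi : i < n) (A : Finset (Fin n))
    (hA : FrontierIn E (i + 1) A) (hv : (⟨i, hi⟩ : Fin n) ∉ A) :
    FrontierIn E i A := by
  obtain ⟨hAlt, hAac, hAfr⟩ := hA
  have hle : ∀ u v, Erest E i u v → Erest E (i + 1) u v := fun _ _ => Erest.mono i.le_succ
  have hAlt' : ∀ a ∈ A, (a : ℕ) < i := fun a ha =>
    (Nat.lt_succ_iff.mp (hAlt a ha)).lt_of_ne fun h => hv ((Fin.ext h : a = ⟨i, hi⟩) ▸ ha)
  refine ⟨hAlt', hAac.of_le hle, fun B hB hBac hBA hdom => ?_⟩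
  exact hAfr B (fun b hb => (hB b hb).trans i.lt_succ_self) (hBac.erest_of_lt hE hB) hBA
    (hdom.of_le hle)
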